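/- Under the noise model Y = f(X) + ε, suppose the model is unbiased, i.e., m(x) = f(x) for all x ∈ S×C, that for each x the map ω_F ↦ f̂(ω_F, x) is square-integrable with respect to P_F, that all integrands below are integrable with respect to P ⊗ P_F, and that (X̃_S, X_C) has the same joint law as (X_S, X_C) (conditional sampling). Then the expected L2-loss PFI over the model distribution equals the DGP-PFI: ∫∫ [(Y − f̂(ω_F,(X̃_S,X_C)))² − (Y − f̂(ω_F,X))²] d(P⊗P_F) = E[(f(X) − f(X̃_S, X_C))²] = PFI_f. -/

import Mathlib

/-!
For a fixed input `x`, unbiasedness turns the bias–variance decomposition of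
`ωF ↦ (c - f̂(ωF, x))²` into `(c - f x)² + v x`. By Fubini the expected loss of the random model
is the loss of `f` plus the expected model variance at the evaluated inputs, and since
`(X̃_S, X_C)` and `(X_S, X_C)` have the same law the two variance terms cancel in the PFI.
Finally `Y - f(X̃_S, X_C) = ε + (f X - f(X̃_S, X_C))` with `ε` centred and independent of the
second summand, so the cross term vanishes and the DGP-PFI is `E[(f X - f(X̃_S, X_C))²]`.
-/

open MeasureTheory ProbabilityTheory

section

variable {α : Type*} [MeasurableSpace α] {μ : Measure α}

theorem integral_const_sub_sq [IsProbabilityMeasure μ] {g : α → ℝ} (hg : MemLp g 2 μ) (c : ℝ) :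
    ∫ a, (c - g a) ^ 2 ∂μ = (c - μ[g]) ^ 2 + variance g μ := by
  have hvar := variance_eq_sub (X := fun a => c - g a) ((memLp_const c).sub hg)
  rw [variance_const_sub hg.aestronglyMeasurable,
    integral_sub (integrable_const c) (hg.integrable one_le_two), integral_const] at hvar
  simp only [probReal_univ, smul_eq_mul, one_mul, Pi.pow_apply] at hvar
  linarith

theorem integral_add_sq_of_indepFun {ε d : α → ℝ} (hε : MemLp ε 2 μ) (hd : MemLp d 2 μ)
    (hind : IndepFun ε d μ) (hε0 : μ[ε] = 0) :
    ∫ a, (ε a + d a) ^ 2 ∂μ = ∫ a, ε a ^ 2 ∂μ + ∫ a, d a ^ 2 ∂μ := by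
  have hcross : ∫ a, ε a * d a ∂μ = 0 := by
    rw [hind.integral_fun_mul_eq_mul_integral hε.aestronglyMeasurable hd.aestronglyMeasurable,
      hε0, zero_mul]
  have hεd : Integrable (fun a => 2 * (ε a * d a)) μ := (hε.integrable_mul hd).const_mul 2
  calc ∫ a, (ε a + d a) ^ 2 ∂μ = ∫ a, (ε a ^ 2 + 2 * (ε a * d a) + d a ^ 2) ∂μ := by
        congr with a; ring
    _ = ∫ a, ε a ^ 2 ∂μ + ∫ a, d a ^ 2 ∂μ := by
      rw [integral_add (f := fun a => ε a ^ 2 + 2 * (ε a * d a)) (hε.integrable_sq.add hεd)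
          hd.integrable_sq,
        integral_add hε.integrable_sq hεd, integral_const_mul, hcross, mul_zero, add_zero]

end

section

variable {Ω β X : Type*} [MeasurableSpace Ω] [MeasurableSpace β]
  {μ : Measure Ω} {ν : Measure β} [IsProbabilityMeasure ν] {F : β × X → ℝ}

theorem measurable_integral_section [MeasurableSpace X] (hF : Measurable F) :
    Measurable fun x => ∫ b, F (b, x) ∂ν :=
  hF.stronglyMeasurable.integral_prod_left'.measurable

theorem measurable_variance_section [MeasurableSpace X] (hF : Measurable F) :
    Measurable fun x => variance (fun b => F (b, x)) ν := by
  have hvar : (fun x => variance (fun b => F (b, x)) ν) =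
      fun x => ∫ b, (F (b, x) - ∫ b', F (b', x) ∂ν) ^ 2 ∂ν :=
    funext fun x => variance_eq_integral (hF.comp measurable_prodMk_right).aemeasurable
  rw [hvar]
  exact ((hF.sub ((measurable_integral_section hF).comp measurable_snd)).pow_const 2)
    |>.stronglyMeasurable.integral_prod_left'.measurable

variable {Y : Ω → ℝ} {Z : Ω → X}

theorem integral_prod_sq_sub_eq_integral_sq_add_variance [SFinite μ]
    (hF2 : ∀ x, MemLp (fun b => F (b, x)) 2 ν)
    (hint : Integrable (fun p : Ω × β => (Y p.1 - F (p.2, Z p.1)) ^ 2) (μ.prod ν)) :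
    ∫ p, (Y p.1 - F (p.2, Z p.1)) ^ 2 ∂(μ.prod ν) =
      ∫ ω, ((Y ω - ∫ b, F (b, Z ω) ∂ν) ^ 2 + variance (fun b => F (b, Z ω)) ν) ∂μ := by
  rw [integral_prod _ hint]
  exact integral_congr_ae (ae_of_all _ fun ω => integral_const_sub_sq (hF2 (Z ω)) (Y ω))

theorem integrable_sq_sub_and_variance_of_integrable_prod [SFinite μ] [MeasurableSpace X]
    (hF : Measurable F) (hF2 : ∀ x, MemLp (fun b => F (b, x)) 2 ν)
    (hY : AEStronglyMeasurable Y μ) (hZ : Measurable Z)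
    (hint : Integrable (fun p : Ω × β => (Y p.1 - F (p.2, Z p.1)) ^ 2) (μ.prod ν)) :
    Integrable (fun ω => (Y ω - ∫ b, F (b, Z ω) ∂ν) ^ 2) μ ∧
      Integrable (fun ω => variance (fun b => F (b, Z ω)) ν) μ := by
  have hsum : Integrable (fun ω => ∫ b, (Y ω - F (b, Z ω)) ^ 2 ∂ν) μ := hint.integral_prod_left
  simp_rw [integral_const_sub_sq (hF2 _)] at hsum
  refine (integrable_add_iff_of_nonneg ?_ (ae_of_all _ fun ω => sq_nonneg _)
    (ae_of_all _ fun ω => variance_nonneg _ _)).mp hsum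
  exact (hY.sub ((measurable_integral_section hF).comp hZ).aestronglyMeasurable).pow 2

end

theorem stmt_10_general
    {Ω S C ΩF : Type*} [MeasurableSpace Ω] [MeasurableSpace S] [MeasurableSpace C]
    [MeasurableSpace ΩF]
    (P : Measure Ω) [IsProbabilityMeasure P]
    (PF : Measure ΩF) [IsProbabilityMeasure PF]
    (XS : Ω → S) (XC : Ω → C) (XtS : Ω → S) (Y : Ω → ℝ) (ε : Ω → ℝ)
    (hXS : Measurable XS) (hXC : Measurable XC) (hXtS : Measurable XtS)
    (f : S × C → ℝ) (hf : Measurable f)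
    (hDGP : ∀ ω, Y ω = f (XS ω, XC ω) + ε ω)
    (hIndep : IndepFun ε (fun ω => (XS ω, XC ω, XtS ω)) P)
    (hε2 : MemLp ε 2 P)
    (hεmean : ∫ ω, ε ω ∂P = 0)
    (fhat : ΩF × (S × C) → ℝ) (hfhat : Measurable fhat)
    (hfhat2 : ∀ x : S × C, MemLp (fun ωF => fhat (ωF, x)) 2 PF)
    (m v : S × C → ℝ)
    (hm : ∀ x, m x = ∫ ωF, fhat (ωF, x) ∂PF)
    (hv : ∀ x, v x = ∫ ωF, (fhat (ωF, x) - m x) ^ 2 ∂PF)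
    (hUnbiased : ∀ x : S × C, m x = f x)
    (hIntPerm : Integrable (fun p : Ω × ΩF =>
      (Y p.1 - fhat (p.2, (XtS p.1, XC p.1))) ^ 2) (P.prod PF))
    (hIntOrig : Integrable (fun p : Ω × ΩF =>
      (Y p.1 - fhat (p.2, (XS p.1, XC p.1))) ^ 2) (P.prod PF))
    (hCondSampling : Measure.map (fun ω => (XtS ω, XC ω)) P
      = Measure.map (fun ω => (XS ω, XC ω)) P) :
    (∫ p : Ω × ΩF, ((Y p.1 - fhat (p.2, (XtS p.1, XC p.1))) ^ 2
        - (Y p.1 - fhat (p.2, (XS p.1, XC p.1))) ^ 2) ∂(P.prod PF))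
      = ∫ ω, (f (XS ω, XC ω) - f (XtS ω, XC ω)) ^ 2 ∂P
    ∧ (∫ ω, (f (XS ω, XC ω) - f (XtS ω, XC ω)) ^ 2 ∂P)
      = (∫ ω, (Y ω - f (XtS ω, XC ω)) ^ 2 ∂P) - ∫ ω, (Y ω - f (XS ω, XC ω)) ^ 2 ∂P := by
  have hmf : ∀ x, ∫ ωF, fhat (ωF, x) ∂PF = f x := fun x => (hm x).symm.trans (hUnbiased x)
  have hvar : ∀ x, variance (fun ωF => fhat (ωF, x)) PF = v x := fun x => by
    rw [hv, hm, variance_eq_integral (hfhat2 x).aemeasurable]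
  have hU : Measurable fun ω => (XS ω, XC ω) := hXS.prodMk hXC
  have hT : Measurable fun ω => (XtS ω, XC ω) := hXtS.prodMk hXC
  have hY : AEStronglyMeasurable Y P := by
    rw [funext hDGP]
    exact (hf.comp hU).aestronglyMeasurable.add hε2.aestronglyMeasurable
  obtain ⟨hYT, hvT⟩ := integrable_sq_sub_and_variance_of_integrable_prod
    (Z := fun ω => (XtS ω, XC ω)) hfhat hfhat2 hY hT hIntPerm
  obtain ⟨hYU, hvU⟩ := integrable_sq_sub_and_variance_of_integrable_prod
    (Z := fun ω => (XS ω, XC ω)) hfhat hfhat2 hY hU hIntOrig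
  have hperm := integral_prod_sq_sub_eq_integral_sq_add_variance
    (Z := fun ω => (XtS ω, XC ω)) hfhat2 hIntPerm
  have horig := integral_prod_sq_sub_eq_integral_sq_add_variance
    (Z := fun ω => (XS ω, XC ω)) hfhat2 hIntOrig
  simp only [hmf, hvar] at hYT hvT hYU hvU hperm horig
  have hvEq : ∫ ω, v (XtS ω, XC ω) ∂P = ∫ ω, v (XS ω, XC ω) ∂P :=
    ((IdentDistrib.mk hT.aemeasurable hU.aemeasurable hCondSampling).comp
      (by simpa only [hvar] using measurable_variance_section (ν := PF) hfhat)).integral_eq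
  set d := fun ω => f (XS ω, XC ω) - f (XtS ω, XC ω)
  have hTε : ∀ ω, Y ω - f (XtS ω, XC ω) = ε ω + d ω := fun ω => by rw [hDGP]; ring
  have hUε : ∀ ω, Y ω - f (XS ω, XC ω) = ε ω := fun ω => by rw [hDGP]; ring
  have hd2 : MemLp d 2 P := by
    have hYT2 : MemLp (fun ω => Y ω - f (XtS ω, XC ω)) 2 P :=
      (memLp_two_iff_integrable_sq (hY.sub (hf.comp hT).aestronglyMeasurable)).2 hYT
    convert hYT2.sub hε2 using 1
    funext ω
    simp only [Pi.sub_apply, hTε, add_sub_cancel_left]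
  have hind : IndepFun ε d P := hIndep.comp measurable_id
    ((hf.comp (measurable_fst.prodMk measurable_snd.fst)).sub
      (hf.comp (measurable_snd.snd.prodMk measurable_snd.fst)))
  have hPFI : ∫ ω, d ω ^ 2 ∂P = (∫ ω, (Y ω - f (XtS ω, XC ω)) ^ 2 ∂P)
      - ∫ ω, (Y ω - f (XS ω, XC ω)) ^ 2 ∂P := by
    simp only [hTε, hUε, integral_add_sq_of_indepFun hε2 hd2 hind hεmean]
    ring
  refine ⟨?_, hPFI⟩
  rw [integral_sub hIntPerm hIntOrig, hperm, horig, integral_add hYT hvT, integral_add hYU hvU,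
    hvEq, hPFI]
  ring

/-- **Unbiasedness of the conditional PFI for unbiased models (L2 loss).** Under the noise
model `Y = f(X) + ε`, if the model is unbiased (`m = f`), `f̂(·, x)` is square-integrable,
all integrands are integrable, and `(X̃_S, X_C)` has the same joint law as `(X_S, X_C)`
(conditional sampling), then the expected L2-loss PFI over the model distribution equals the
DGP-PFI:
`∫∫ [(Y − f̂(ω_F,(X̃_S,X_C)))² − (Y − f̂(ω_F,X))²] d(P⊗P_F) = E[(f(X) − f(X̃_S,X_C))²] = PFI_f`. -/
theorem stmt_10
    {Ω S C ΩF : Type*} [MeasurableSpace Ω] [MeasurableSpace S] [MeasurableSpace C]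
    [MeasurableSpace ΩF]
    (P : Measure Ω) [IsProbabilityMeasure P]
    (PF : Measure ΩF) [IsProbabilityMeasure PF]
    (XS : Ω → S) (XC : Ω → C) (XtS : Ω → S) (Y : Ω → ℝ) (ε : Ω → ℝ)
    (hXS : Measurable XS) (hXC : Measurable XC) (hXtS : Measurable XtS)
    (hε : Measurable ε)
    (f : S × C → ℝ) (hf : Measurable f)
    (hDGP : ∀ ω, Y ω = f (XS ω, XC ω) + ε ω)
    (hIndep : IndepFun ε (fun ω => (XS ω, XC ω, XtS ω)) P)
    (hε2 : MemLp ε 2 P)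
    (hεmean : ∫ ω, ε ω ∂P = 0)
    (σ : ℝ) (hεvar : variance ε P = σ ^ 2)
    (fhat : ΩF × (S × C) → ℝ) (hfhat : Measurable fhat)
    (hfhat2 : ∀ x : S × C, MemLp (fun ωF => fhat (ωF, x)) 2 PF)
    (m v : S × C → ℝ)
    (hm : ∀ x, m x = ∫ ωF, fhat (ωF, x) ∂PF)
    (hv : ∀ x, v x = ∫ ωF, (fhat (ωF, x) - m x) ^ 2 ∂PF)
    (hUnbiased : ∀ x : S × C, m x = f x)
    (hIntPerm : Integrable (fun p : Ω × ΩF =>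
      (Y p.1 - fhat (p.2, (XtS p.1, XC p.1))) ^ 2) (P.prod PF))
    (hIntOrig : Integrable (fun p : Ω × ΩF =>
      (Y p.1 - fhat (p.2, (XS p.1, XC p.1))) ^ 2) (P.prod PF))
    (hfX2 : MemLp (fun ω => f (XS ω, XC ω)) 2 P)
    (hfXt2 : MemLp (fun ω => f (XtS ω, XC ω)) 2 P)
    (hIntVarPerm : Integrable (fun ω => v (XtS ω, XC ω)) P)
    (hIntVarOrig : Integrable (fun ω => v (XS ω, XC ω)) P)
    (hCondSampling : Measure.map (fun ω => (XtS ω, XC ω)) P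
      = Measure.map (fun ω => (XS ω, XC ω)) P) :
    (∫ p : Ω × ΩF, ((Y p.1 - fhat (p.2, (XtS p.1, XC p.1))) ^ 2
        - (Y p.1 - fhat (p.2, (XS p.1, XC p.1))) ^ 2) ∂(P.prod PF))
      = ∫ ω, (f (XS ω, XC ω) - f (XtS ω, XC ω)) ^ 2 ∂P
    ∧ (∫ ω, (f (XS ω, XC ω) - f (XtS ω, XC ω)) ^ 2 ∂P)
      = (∫ ω, (Y ω - f (XtS ω, XC ω)) ^ 2 ∂P) - ∫ ω, (Y ω - f (XS ω, XC ω)) ^ 2 ∂P :=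
  stmt_10_general P PF XS XC XtS Y ε hXS hXC hXtS f hf hDGP hIndep hε2 hεmean fhat hfhat hfhat2 m v
    hm hv hUnbiased hIntPerm hIntOrig hCondSampling
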